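/- arXiv:2203.07935 — 5 statements merged into one kernel-verified Lean document; each statement's English description precedes it below -/
import Mathlib

section
/- Let (E, ‖·‖) be a Banach space and X a nonempty set. Let h_1,…,h_n : X → X be injective maps whose images X_i := h_i(X) partition X (i.e., X is the disjoint union of the X_i). Let q_i : X → F and s_i : X → ℝ be bounded functions into a Banach space F and ℝ respectively, with s := max_i sup_{x∈X} |s_i(x)| < 1. Then the Read–Bajraktarević operator T : B(X,F) → B(X,F) defined by (Tf)(x) := q_i(h_i⁻¹(x)) + s_i(h_i⁻¹(x))·f(h_i⁻¹(x)) for x ∈ X_i is a contraction on the Banach space B(X,F) of bounded functions with supremum norm, with Lipschitz constant at most s. -/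
/-- The Read–Bajraktarević operator on the space `BoundedContinuousFunction X F` of bounded
functions (discrete topology on `X`) is a contraction with Lipschitz constant at most `c`,
where the images of the injective maps `h i` partition `X`, the `q i` are bounded,
and `|s i x| ≤ c < 1`. -/
theorem stmt_0 {X : Type*} [TopologicalSpace X] [DiscreteTopology X] [Nonempty X]
    {F : Type*} [NormedAddCommGroup F] [NormedSpace ℝ F]
    (n : ℕ) (h : Fin n → X → X)
    (hinj : ∀ i, Function.Injective (h i))
    (hcover : ∀ x : X, ∃ i, x ∈ Set.range (h i))
    (hdisj : ∀ i j, i ≠ j → Disjoint (Set.range (h i)) (Set.range (h j)))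
    (q : Fin n → BoundedContinuousFunction X F) (s : Fin n → X → ℝ)
    (c : ℝ) (hc0 : 0 ≤ c) (hc1 : c < 1)
    (hs : ∀ i x, |s i x| ≤ c)
    (T : (BoundedContinuousFunction X F) → (BoundedContinuousFunction X F))
    (hT : ∀ f i x, T f (h i x) = q i x + s i x • f x) :
    LipschitzWith ⟨c, hc0⟩ T := by
  apply LipschitzWith.of_dist_le_mul
  intro f g
  rw [BoundedContinuousFunction.dist_le (by positivity)]
  intro x
  obtain ⟨i, y, rfl⟩ := hcover x
  rw [hT, hT, dist_eq_norm]
  have : q i y + s i y • f y - (q i y + s i y • g y) = s i y • (f y - g y) := by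
    module
  rw [this, norm_smul]
  calc ‖s i y‖ * ‖f y - g y‖ ≤ c * ‖f y - g y‖ := by
        apply mul_le_mul_of_nonneg_right (hs i y) (norm_nonneg _)
    _ ≤ c * dist f g := by
        apply mul_le_mul_of_nonneg_left _ hc0
        rw [← dist_eq_norm]
        exact BoundedContinuousFunction.dist_coe_le_dist y
end

section
/- Let X be a nonempty set partitioned as the disjoint union of images h_i(X) of injective maps h_i : X → X, i = 1,…,n. Let F be a Banach space, q_i : X → F bounded, and s_i : X → ℝ bounded with max_i sup_x |s_i(x)| < 1. Then there exists a unique bounded function ψ : X → F satisfying the self-referential system ψ(h_i(x)) = q_i(x) + s_i(x)·ψ(x) for all x ∈ X and all i = 1,…,n. -/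
/-! The maps `h i` assemble into a bijection `ι × X ≃ X`, so the system prescribes `ψ` at every
point exactly once, as an affine function of `ψ` at the preimage: `ψ` solves it iff it is a fixed
point of the Read–Bajraktarević operator
`(T f) (h i x) = q i x + s i x • f x` on bounded functions. Since `|s i x| ≤ K < 1`, `T` is a
`K`-contraction of the complete space `X →ᵇ F`, and Banach's fixed point theorem applies. -/

open BoundedContinuousFunction

theorem Function.bijective_uncurry_of_pairwise_disjoint_range {ι α β : Type*}
    (f : ι → α → β) (hinj : ∀ i, Injective (f i))
    (hdisj : ∀ i j, i ≠ j → Disjoint (Set.range (f i)) (Set.range (f j)))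
    (hcover : ∀ b, ∃ i, b ∈ Set.range (f i)) :
    Bijective (uncurry f) := by
  refine ⟨fun ⟨i, a⟩ ⟨j, b⟩ hab => ?_, fun b => ?_⟩
  · obtain rfl : i = j := by
      by_contra hij
      exact Set.disjoint_left.1 (hdisj i j hij) ⟨a, rfl⟩ ⟨b, hab.symm⟩
    exact congrArg (Prod.mk i) (hinj i hab)
  · obtain ⟨i, a, rfl⟩ := hcover b
    exact ⟨(i, a), rfl⟩

theorem BoundedContinuousFunction.norm_smul_apply_le {X F : Type*} [TopologicalSpace X]
    [NormedAddCommGroup F] [NormedSpace ℝ F] {a K : ℝ} (hK : 0 ≤ K) (ha : |a| ≤ K) (f : X →ᵇ F)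
    (x : X) :
    ‖a • f x‖ ≤ K * ‖f‖ := by
  rw [norm_smul, Real.norm_eq_abs]
  exact mul_le_mul ha (f.norm_coe_le_norm x) (norm_nonneg _) hK

namespace ReadBajraktarevic

variable {ι X F : Type*} [Fintype ι] [TopologicalSpace X] [DiscreteTopology X]
  [NormedAddCommGroup F] [NormedSpace ℝ F]
  (e : ι × X ≃ X) (q : ι → X →ᵇ F) (s : ι → X → ℝ) {K : ℝ}

noncomputable def operator (hK : 0 ≤ K) (hs : ∀ i x, |s i x| ≤ K) (f : X →ᵇ F) : X →ᵇ F :=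
  ofNormedAddCommGroupDiscrete
    (fun y => q (e.symm y).1 (e.symm y).2 + s (e.symm y).1 (e.symm y).2 • f (e.symm y).2)
    (∑ i, ‖q i‖ + K * ‖f‖)
    fun _ => (norm_add_le _ _).trans <| add_le_add
      (((q _).norm_coe_le_norm _).trans <|
        Finset.single_le_sum (f := fun i => ‖q i‖) (fun _ _ => norm_nonneg _) (Finset.mem_univ _))
      (norm_smul_apply_le hK (hs _ _) f _)

@[simp]
theorem operator_apply_equiv (hK : 0 ≤ K) (hs : ∀ i x, |s i x| ≤ K) (f : X →ᵇ F) (i : ι)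
    (x : X) :
    operator e q s hK hs f (e (i, x)) = q i x + s i x • f x := by
  simp [operator]

theorem contractingWith_operator (hK : 0 ≤ K) (hs : ∀ i x, |s i x| ≤ K) (hK1 : K < 1) :
    ContractingWith ⟨K, hK⟩ (operator e q s hK hs) := by
  refine ⟨hK1, LipschitzWith.of_dist_le_mul fun f g => ?_⟩
  refine (dist_le (by positivity)).2 fun y => ?_
  obtain ⟨⟨i, x⟩, rfl⟩ := e.surjective y
  rw [operator_apply_equiv, operator_apply_equiv, dist_add_left, dist_smul₀, Real.norm_eq_abs]
  exact mul_le_mul (hs i x) (f.dist_coe_le_dist x) dist_nonneg hK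

theorem isFixedPt_operator_iff (hK : 0 ≤ K) (hs : ∀ i x, |s i x| ≤ K) (ψ : X →ᵇ F) :
    Function.IsFixedPt (operator e q s hK hs) ψ ↔ ∀ i x, ψ (e (i, x)) = q i x + s i x • ψ x := by
  refine ⟨fun hψ i x => ?_, fun hψ => ext fun y => ?_⟩
  · rw [← operator_apply_equiv e q s hK hs, hψ]
  · obtain ⟨⟨i, x⟩, rfl⟩ := e.surjective y
    rw [operator_apply_equiv, hψ]

theorem existsUnique_solution [CompleteSpace F] (hK : 0 ≤ K) (hs : ∀ i x, |s i x| ≤ K)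
    (hK1 : K < 1) :
    ∃! ψ : X →ᵇ F, ∀ i x, ψ (e (i, x)) = q i x + s i x • ψ x := by
  have hT := contractingWith_operator e q s hK hs hK1
  refine ⟨hT.fixedPoint, (isFixedPt_operator_iff e q s hK hs _).1 hT.fixedPoint_isFixedPt,
    fun ψ hψ => hT.fixedPoint_unique ((isFixedPt_operator_iff e q s hK hs ψ).2 hψ)⟩

end ReadBajraktarevic

theorem stmt_1_general {X : Type*} [TopologicalSpace X] [DiscreteTopology X]
    {F : Type*} [NormedAddCommGroup F] [NormedSpace ℝ F] [CompleteSpace F]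
    (n : ℕ) (h : Fin n → X → X)
    (hinj : ∀ i, Function.Injective (h i))
    (hcover : ∀ x : X, ∃ i, x ∈ Set.range (h i))
    (hdisj : ∀ i j, i ≠ j → Disjoint (Set.range (h i)) (Set.range (h j)))
    (q : Fin n → BoundedContinuousFunction X F) (s : Fin n → X → ℝ)
    (c : ℝ) (hc1 : c < 1)
    (hs : ∀ i x, |s i x| ≤ c) :
    ∃! ψ : BoundedContinuousFunction X F, ∀ i x, ψ (h i x) = q i x + s i x • ψ x :=
  ReadBajraktarevic.existsUnique_solution
    (.ofBijective _ (Function.bijective_uncurry_of_pairwise_disjoint_range h hinj hdisj hcover))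
    q s (le_max_right c 0) (fun i x => (hs i x).trans (le_max_left c 0)) (max_lt hc1 zero_lt_one)

/-- Existence and uniqueness of a bounded solution `ψ` of the
self-referential system `ψ (h i x) = q i x + s i x • ψ x`, where the images of the
injective maps `h i` partition `X`, the `q i` are bounded and `|s i x| ≤ c < 1`.
Bounded functions are modeled as `BoundedContinuousFunction X F` with `X` discrete. -/
theorem stmt_1 {X : Type*} [TopologicalSpace X] [DiscreteTopology X] [Nonempty X]
    {F : Type*} [NormedAddCommGroup F] [NormedSpace ℝ F] [CompleteSpace F]
    (n : ℕ) (h : Fin n → X → X)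
    (hinj : ∀ i, Function.Injective (h i))
    (hcover : ∀ x : X, ∃ i, x ∈ Set.range (h i))
    (hdisj : ∀ i j, i ≠ j → Disjoint (Set.range (h i)) (Set.range (h j)))
    (q : Fin n → BoundedContinuousFunction X F) (s : Fin n → X → ℝ)
    (c : ℝ) (hc1 : c < 1)
    (hs : ∀ i x, |s i x| ≤ c) :
    ∃! ψ : BoundedContinuousFunction X F, ∀ i x, ψ (h i x) = q i x + s i x • ψ x :=
  stmt_1_general n h hinj hcover hdisj q s c hc1 hs
end

section
/- Let F be a Banach algebra (a Banach space with an associative product • satisfying ‖f₁•f₂‖ ≤ ‖f₁‖‖f₂‖). Let X be a nonempty set partitioned by the images of injective maps h_i : X → X, i = 1,…,n, and let q_i, s_i : X → F be bounded functions with max_i sup_{x∈X} ‖s_i(x)‖_F < 1. Then there exists a unique bounded function ψ : X → F satisfying ψ(h_i(x)) = q_i(x) + s_i(x) • ψ(x) for all x ∈ X and all i. -/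
/-- Banach-algebra-valued fractal interpolation. `F` is a Banach algebra
(modeled as a complete normed ring, so `‖a * b‖ ≤ ‖a‖ * ‖b‖`), the images of the
injective maps `h i` partition `X`, `q i, s i : X → F` are bounded with
`max_i sup_x ‖s i x‖ ≤ c < 1`. Then there is a unique bounded `ψ : X → F` with
`ψ (h i x) = q i x + s i x • ψ x` (multiplication in `F`). -/
theorem stmt_3 {X : Type*} [TopologicalSpace X] [DiscreteTopology X] [Nonempty X]
    {F : Type*} [NormedRing F] [CompleteSpace F]
    (n : ℕ) (h : Fin n → X → X)
    (hinj : ∀ i, Function.Injective (h i))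
    (hcover : ∀ x : X, ∃ i, x ∈ Set.range (h i))
    (hdisj : ∀ i j, i ≠ j → Disjoint (Set.range (h i)) (Set.range (h j)))
    (q : Fin n → BoundedContinuousFunction X F) (s : Fin n → X → F)
    (c : ℝ) (hc1 : c < 1)
    (hs : ∀ i x, ‖s i x‖ ≤ c) :
    ∃! ψ : BoundedContinuousFunction X F, ∀ i x, ψ (h i x) = q i x + s i x * ψ x := by
  classical
  obtain ⟨x0⟩ := ‹Nonempty X›
  obtain ⟨i0, -⟩ := hcover x0
  have hc0 : (0:ℝ) ≤ c := le_trans (norm_nonneg _) (hs i0 x0)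
  -- choose decomposition
  have hdecomp : ∀ y : X, ∃ i x, h i x = y := by
    intro y
    obtain ⟨i, x, hx⟩ := hcover y
    exact ⟨i, x, hx⟩
  choose idx pt hpt using hdecomp
  -- uniqueness of decomposition
  have huniq : ∀ i x, idx (h i x) = i ∧ pt (h i x) = x := by
    intro i x
    have key : h (idx (h i x)) (pt (h i x)) = h i x := hpt _
    have hij : idx (h i x) = i := by
      by_contra hne
      exact Set.disjoint_left.1 (hdisj _ _ hne) ⟨pt (h i x), key⟩ ⟨x, rfl⟩
    rw [hij] at key
    exact ⟨hij, hinj i key⟩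
  -- q bound
  set Q : ℝ := ∑ i : Fin n, ‖q i‖ with hQ
  have hqb : ∀ i x, ‖q i x‖ ≤ Q := by
    intro i x
    refine le_trans ((q i).norm_coe_le_norm x) ?_
    exact Finset.single_le_sum (f := fun i => ‖q i‖) (fun _ _ => norm_nonneg _)
      (Finset.mem_univ i)
  -- the operator
  set T : BoundedContinuousFunction X F → BoundedContinuousFunction X F := fun ψ =>
    BoundedContinuousFunction.ofNormedAddCommGroup
      (fun y => q (idx y) (pt y) + s (idx y) (pt y) * ψ (pt y))
      (continuous_of_discreteTopology) (Q + c * ‖ψ‖)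
      (by
        intro y
        refine le_trans (norm_add_le _ _) (add_le_add (hqb _ _) ?_)
        refine le_trans (norm_mul_le _ _) ?_
        exact mul_le_mul (hs _ _) (ψ.norm_coe_le_norm _) (norm_nonneg _) hc0) with hT
  have hTapp : ∀ ψ y, T ψ y = q (idx y) (pt y) + s (idx y) (pt y) * ψ (pt y) := by
    intro ψ y; rfl
  have hlip : LipschitzWith ⟨c, hc0⟩ T := by
    refine LipschitzWith.of_dist_le_mul fun ψ φ => ?_
    refine BoundedContinuousFunction.dist_le (mul_nonneg hc0 dist_nonneg) |>.2 fun y => ?_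
    rw [hTapp, hTapp, dist_eq_norm]
    have : q (idx y) (pt y) + s (idx y) (pt y) * ψ (pt y) -
        (q (idx y) (pt y) + s (idx y) (pt y) * φ (pt y)) =
        s (idx y) (pt y) * (ψ (pt y) - φ (pt y)) := by
      rw [add_sub_add_left_eq_sub, mul_sub]
    rw [this]
    refine le_trans (norm_mul_le _ _) ?_
    refine mul_le_mul (hs _ _) ?_ (norm_nonneg _) hc0
    rw [← dist_eq_norm]
    exact BoundedContinuousFunction.dist_coe_le_dist _
  have hcontr : ContractingWith ⟨c, hc0⟩ T := ⟨by exact_mod_cast hc1, hlip⟩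
  -- characterize fixed points
  have hfix : ∀ ψ : BoundedContinuousFunction X F,
      (∀ i x, ψ (h i x) = q i x + s i x * ψ x) ↔ T ψ = ψ := by
    intro ψ
    constructor
    · intro hψ
      ext y
      rw [hTapp]
      conv_rhs => rw [← hpt y]
      rw [hψ]
    · intro hψ i x
      have := congrArg (fun f : BoundedContinuousFunction X F => f (h i x)) hψ
      rw [← this, hTapp, (huniq i x).1, (huniq i x).2]
  refine ⟨hcontr.fixedPoint T, ?_, ?_⟩
  · exact (hfix _).2 hcontr.fixedPoint_isFixedPt
  · intro ψ hψ
    exact hcontr.fixedPoint_unique ((hfix ψ).1 hψ)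
end

section
/- Let X ⊆ E and Y ⊆ F be nonempty subsets of Banach spaces, h_i : X → X maps with Lip(h) := max_i Lip(h_i) < 1, and v_i : X × Y → F maps that are uniformly Lipschitz in the first variable with constant λ > 0 (‖v_i(x₁,y) − v_i(x₂,y)‖_F ≤ λ‖x₁−x₂‖_E for all y) and uniformly contractive in the second variable with constant c ∈ [0,1) (‖v_i(x,y₁) − v_i(x,y₂)‖_F ≤ c‖y₁−y₂‖_F for all x). Set ϑ := (1−Lip(h))/(2λ). Then each map w_i(x,y) := (h_i(x), v_i(x,y)) on X × Y is a contraction with respect to the norm ‖(x,y)‖_ϑ = ‖x‖_E + ϑ‖y‖_F. -/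
/-!
Weighting the second coordinate by `ϑ = (1 - Lh) / (2λ)` turns the cross term `λ‖x₁ - x₂‖`
coming from `v` into `(1 - Lh)/2 ‖x₁ - x₂‖`, which uses up only half of the slack of the
contraction `h`. Hence `w` contracts with constant `max ((1 + Lh) / 2) c`.
-/

lemma norm_sub_le_of_lipschitz_left_right {E F G : Type*} [SeminormedAddGroup E]
    [SeminormedAddGroup F] [SeminormedAddGroup G] {X : Set E} {Y : Set F} {f : E → F → G}
    {a b : ℝ} (hx : ∀ y ∈ Y, ∀ x₁ ∈ X, ∀ x₂ ∈ X, ‖f x₁ y - f x₂ y‖ ≤ a * ‖x₁ - x₂‖)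
    (hy : ∀ x ∈ X, ∀ y₁ ∈ Y, ∀ y₂ ∈ Y, ‖f x y₁ - f x y₂‖ ≤ b * ‖y₁ - y₂‖)
    {x₁ x₂ : E} (hx₁ : x₁ ∈ X) (hx₂ : x₂ ∈ X) {y₁ y₂ : F} (hy₁ : y₁ ∈ Y) (hy₂ : y₂ ∈ Y) :
    ‖f x₁ y₁ - f x₂ y₂‖ ≤ a * ‖x₁ - x₂‖ + b * ‖y₁ - y₂‖ :=
  calc ‖f x₁ y₁ - f x₂ y₂‖ ≤ ‖f x₁ y₁ - f x₂ y₁‖ + ‖f x₂ y₁ - f x₂ y₂‖ :=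
        norm_sub_le_norm_sub_add_norm_sub _ _ _
    _ ≤ a * ‖x₁ - x₂‖ + b * ‖y₁ - y₂‖ :=
        add_le_add (hx y₁ hy₁ x₁ hx₁ x₂ hx₂) (hy x₂ hx₂ y₁ hy₁ y₂ hy₂)

lemma add_mul_le_max_mul_add_mul_of_triangular {L lam c ϑ a b p q : ℝ} (hϑ : 0 ≤ ϑ)
    (hϑlam : ϑ * lam ≤ (1 - L) / 2) (ha : 0 ≤ a) (hb : 0 ≤ b)
    (hp : p ≤ L * a) (hq : q ≤ lam * a + c * b) :
    p + ϑ * q ≤ max ((1 + L) / 2) c * (a + ϑ * b) :=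
  calc p + ϑ * q ≤ L * a + ϑ * lam * a + c * (ϑ * b) := by
        linear_combination hp + mul_le_mul_of_nonneg_left hq hϑ
    _ ≤ (1 + L) / 2 * a + c * (ϑ * b) := by
        linear_combination mul_le_mul_of_nonneg_right hϑlam ha
    _ ≤ max ((1 + L) / 2) c * a + max ((1 + L) / 2) c * (ϑ * b) := by
        gcongr
        exacts [le_max_left _ _, le_max_right _ _]
    _ = max ((1 + L) / 2) c * (a + ϑ * b) := by ring

theorem stmt_9_general {E F : Type*} [NormedAddCommGroup E] [NormedAddCommGroup F]
    (X : Set E) (Y : Set F)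
    (n : ℕ) (h : Fin n → E → E)
    (Lh : ℝ) (hLh1 : Lh < 1)
    (hhlip : ∀ i, ∀ x₁ ∈ X, ∀ x₂ ∈ X, ‖h i x₁ - h i x₂‖ ≤ Lh * ‖x₁ - x₂‖)
    (v : Fin n → E → F → F) (lam : ℝ) (hlam : 0 < lam)
    (hvx : ∀ i, ∀ y ∈ Y, ∀ x₁ ∈ X, ∀ x₂ ∈ X, ‖v i x₁ y - v i x₂ y‖ ≤ lam * ‖x₁ - x₂‖)
    (c : ℝ) (hc0 : 0 ≤ c) (hc1 : c < 1)
    (hvy : ∀ i, ∀ x ∈ X, ∀ y₁ ∈ Y, ∀ y₂ ∈ Y, ‖v i x y₁ - v i x y₂‖ ≤ c * ‖y₁ - y₂‖) :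
    ∃ K : ℝ, 0 ≤ K ∧ K < 1 ∧ ∀ i, ∀ x₁ ∈ X, ∀ x₂ ∈ X, ∀ y₁ ∈ Y, ∀ y₂ ∈ Y,
      ‖h i x₁ - h i x₂‖ + (1 - Lh) / (2 * lam) * ‖v i x₁ y₁ - v i x₂ y₂‖ ≤
        K * (‖x₁ - x₂‖ + (1 - Lh) / (2 * lam) * ‖y₁ - y₂‖) := by
  have hϑ : 0 ≤ (1 - Lh) / (2 * lam) := div_nonneg (by linarith) (by linarith)
  have hϑlam : (1 - Lh) / (2 * lam) * lam = (1 - Lh) / 2 := by field_simp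
  refine ⟨max ((1 + Lh) / 2) c, le_max_of_le_right hc0, max_lt (by linarith) hc1, ?_⟩
  intro i x₁ hx₁ x₂ hx₂ y₁ hy₁ y₂ hy₂
  exact add_mul_le_max_mul_add_mul_of_triangular hϑ hϑlam.le (norm_nonneg _) (norm_nonneg _)
    (hhlip i x₁ hx₁ x₂ hx₂)
    (norm_sub_le_of_lipschitz_left_right (hvx i) (hvy i) hx₁ hx₂ hy₁ hy₂)

/-- With `Lip(h) ≤ Lh < 1`, `v i` uniformly `λ`-Lipschitz in the first
variable and uniformly `c`-contractive (`c < 1`) in the second variable, and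
`ϑ := (1 − Lh)/(2λ)`, each map `w i (x,y) := (h i x, v i x y)` is a contraction on
`X × Y` with respect to the norm `‖(x,y)‖_ϑ = ‖x‖ + ϑ‖y‖`. -/
theorem stmt_9 {E F : Type*} [NormedAddCommGroup E] [NormedAddCommGroup F]
    (X : Set E) (Y : Set F) (hX : X.Nonempty) (hY : Y.Nonempty)
    (n : ℕ) (h : Fin n → E → E) (hmaps : ∀ i, Set.MapsTo (h i) X X)
    (Lh : ℝ) (hLh0 : 0 ≤ Lh) (hLh1 : Lh < 1)
    (hhlip : ∀ i, ∀ x₁ ∈ X, ∀ x₂ ∈ X, ‖h i x₁ - h i x₂‖ ≤ Lh * ‖x₁ - x₂‖)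
    (v : Fin n → E → F → F) (lam : ℝ) (hlam : 0 < lam)
    (hvx : ∀ i, ∀ y ∈ Y, ∀ x₁ ∈ X, ∀ x₂ ∈ X, ‖v i x₁ y - v i x₂ y‖ ≤ lam * ‖x₁ - x₂‖)
    (c : ℝ) (hc0 : 0 ≤ c) (hc1 : c < 1)
    (hvy : ∀ i, ∀ x ∈ X, ∀ y₁ ∈ Y, ∀ y₂ ∈ Y, ‖v i x y₁ - v i x y₂‖ ≤ c * ‖y₁ - y₂‖) :
    ∃ K : ℝ, 0 ≤ K ∧ K < 1 ∧ ∀ i, ∀ x₁ ∈ X, ∀ x₂ ∈ X, ∀ y₁ ∈ Y, ∀ y₂ ∈ Y,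
      ‖h i x₁ - h i x₂‖ + (1 - Lh) / (2 * lam) * ‖v i x₁ y₁ - v i x₂ y₂‖ ≤
        K * (‖x₁ - x₂‖ + (1 - Lh) / (2 * lam) * ‖y₁ - y₂‖) :=
  stmt_9_general X Y n h Lh hLh1 hhlip v lam hlam hvx c hc0 hc1 hvy
end

section
/- Let X be a nonempty set partitioned by the images of injective maps h_i : X → X, and let v_i : X × F → F be maps into a Banach space F that are uniformly contractive in the second variable: there exists c ∈ [0,1) with ‖v_i(x,y₁) − v_i(x,y₂)‖_F ≤ c‖y₁ − y₂‖_F for all x ∈ X, i = 1,…,n. Assume moreover that x ↦ v_i(x, 0) is bounded for each i. Then the generalized Read–Bajraktarević operator (Tf)(x) := v_i(h_i⁻¹(x), f(h_i⁻¹(x))) for x ∈ h_i(X) maps B(X,F) into itself and is a contraction with constant c; hence there is a unique bounded ψ : X → F with ψ(h_i(x)) = v_i(x, ψ(x)) for all x ∈ X and all i. -/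
/-- Generalized RB operator: with the images of the injective `h i`
partitioning `X`, maps `v i : X × F → F` uniformly `c`-contractive (`c < 1`) in the
second variable and `x ↦ v i x 0` bounded, there is an operator `T` on the space of
bounded functions (`BoundedContinuousFunction X F` with `X` discrete) satisfying
`(T f)(h i x) = v i x (f x)` which is `c`-Lipschitz, and a unique bounded `ψ` with
`ψ (h i x) = v i x (ψ x)` for all `i, x`. -/
theorem stmt_18 {X : Type*} [TopologicalSpace X] [DiscreteTopology X] [Nonempty X]
    {F : Type*} [NormedAddCommGroup F] [NormedSpace ℝ F] [CompleteSpace F]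
    (n : ℕ) (h : Fin n → X → X)
    (hinj : ∀ i, Function.Injective (h i))
    (hcover : ∀ x : X, ∃ i, x ∈ Set.range (h i))
    (hdisj : ∀ i j, i ≠ j → Disjoint (Set.range (h i)) (Set.range (h j)))
    (v : Fin n → X → F → F)
    (c : ℝ) (hc0 : 0 ≤ c) (hc1 : c < 1)
    (hvy : ∀ i x y₁ y₂, ‖v i x y₁ - v i x y₂‖ ≤ c * ‖y₁ - y₂‖)
    (hvb : ∀ i, ∃ M : ℝ, ∀ x, ‖v i x 0‖ ≤ M) :
    (∃ T : BoundedContinuousFunction X F → BoundedContinuousFunction X F,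
      (∀ f i x, T f (h i x) = v i x (f x)) ∧ LipschitzWith ⟨c, hc0⟩ T) ∧
    (∃! ψ : BoundedContinuousFunction X F, ∀ i x, ψ (h i x) = v i x (ψ x)) := by
  classical
  have hex : ∀ x : X, ∃ q : Fin n × X, h q.1 q.2 = x := by
    intro x
    obtain ⟨i, z, hz⟩ := hcover x
    exact ⟨(i, z), hz⟩
  choose q hq using hex
  have hqhi : ∀ i x, q (h i x) = (i, x) := by
    intro i x
    have h1 : h (q (h i x)).1 (q (h i x)).2 = h i x := hq _
    rcases heq : q (h i x) with ⟨j, w⟩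
    rw [heq] at h1
    have hi1 : j = i := by
      by_contra hne
      have := hdisj _ _ hne
      exact (Set.disjoint_left.1 this ⟨_, h1⟩) ⟨x, rfl⟩
    subst hi1
    have hi2 : w = x := hinj j h1
    rw [hi2]
  choose M hM using hvb
  -- the underlying function of T f
  set Tf : (X → F) → X → F := fun f x => v (q x).1 (q x).2 (f (q x).2) with hTf
  have hbound : ∀ f : BoundedContinuousFunction X F, ∀ x,
      ‖Tf f x‖ ≤ c * ‖f‖ + ∑ i, |M i| := by
    intro f x
    have h1 : ‖Tf f x - v (q x).1 (q x).2 0‖ ≤ c * ‖f (q x).2‖ := by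
      simpa using hvy (q x).1 (q x).2 (f (q x).2) 0
    have h2 : ‖v (q x).1 (q x).2 0‖ ≤ ∑ i, |M i| := by
      calc ‖v (q x).1 (q x).2 0‖ ≤ M (q x).1 := hM _ _
        _ ≤ |M (q x).1| := le_abs_self _
        _ ≤ ∑ i, |M i| := Finset.single_le_sum (fun i _ => abs_nonneg (M i))
            (Finset.mem_univ _)
    calc ‖Tf f x‖ ≤ ‖Tf f x - v (q x).1 (q x).2 0‖ + ‖v (q x).1 (q x).2 0‖ := by
            simpa using norm_add_le (Tf f x - v (q x).1 (q x).2 0) (v (q x).1 (q x).2 0)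
      _ ≤ c * ‖f (q x).2‖ + ∑ i, |M i| := add_le_add h1 h2
      _ ≤ c * ‖f‖ + ∑ i, |M i| := by
          gcongr
          exact f.norm_coe_le_norm _
  set T : BoundedContinuousFunction X F → BoundedContinuousFunction X F := fun f =>
    BoundedContinuousFunction.ofNormedAddCommGroup (Tf f) continuous_of_discreteTopology
      (c * ‖f‖ + ∑ i, |M i|) (hbound f) with hT
  have hTapp : ∀ f i x, T f (h i x) = v i x (f x) := by
    intro f i x
    show Tf f (h i x) = v i x (f x)
    rw [hTf]
    simp only [hqhi]
  have hlip : LipschitzWith ⟨c, hc0⟩ T := by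
    apply LipschitzWith.of_dist_le_mul
    intro f g
    show dist (T f) (T g) ≤ c * dist f g
    rw [BoundedContinuousFunction.dist_le (by positivity)]
    intro x
    have : dist (T f x) (T g x) ≤ c * dist (f (q x).2) (g (q x).2) := by
      simp only [dist_eq_norm]
      exact hvy (q x).1 (q x).2 _ _
    calc dist (T f x) (T g x) ≤ c * dist (f (q x).2) (g (q x).2) := this
      _ ≤ c * dist f g := by
          gcongr
          exact BoundedContinuousFunction.dist_coe_le_dist _
  have hcontr : ContractingWith ⟨c, hc0⟩ T := ⟨by exact_mod_cast hc1, hlip⟩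
  refine ⟨⟨T, hTapp, hlip⟩, ?_⟩
  -- fixed points of T are exactly functions satisfying the equations
  have hfix : ∀ ψ : BoundedContinuousFunction X F,
      (∀ i x, ψ (h i x) = v i x (ψ x)) ↔ Function.IsFixedPt T ψ := by
    intro ψ
    constructor
    · intro hψ
      apply BoundedContinuousFunction.ext
      intro x
      have hx := hq x
      calc T ψ x = T ψ (h (q x).1 (q x).2) := by rw [hx]
        _ = v (q x).1 (q x).2 (ψ (q x).2) := hTapp ψ _ _
        _ = ψ (h (q x).1 (q x).2) := (hψ _ _).symm
        _ = ψ x := by rw [hx]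
    · intro hψ i x
      calc ψ (h i x) = T ψ (h i x) := by rw [hψ]
        _ = v i x (ψ x) := hTapp ψ i x
  refine ⟨hcontr.fixedPoint T, ?_, ?_⟩
  · exact (hfix _).2 hcontr.fixedPoint_isFixedPt
  · intro φ hφ
    exact hcontr.fixedPoint_unique ((hfix φ).1 hφ)
end
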